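/- arXiv:2503.14497 — 3 statements merged into one kernel-verified Lean document; each statement's English description precedes it below -/
import Mathlib

section
/- Let U be a finite subset of Z^d. Then (i) every finite connected component of Z^d \ U is surrounded by U, and (ii) U is surrounded by its exterior boundary partial^ext U. -/
open scoped BigOperators

/-- Nearest-neighbor adjacency on `ℤ^d`. -/
def latAdj {d : ℕ} (x y : Fin d → ℤ) : Prop := (∑ i : Fin d, |x i - y i|) = 1

/-- `*`-adjacency on `ℤ^d` (`ℓ^∞`-distance one). -/
def latAdjStar {d : ℕ} (x y : Fin d → ℤ) : Prop := x ≠ y ∧ ∀ i : Fin d, |x i - y i| ≤ 1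

/-- A nearest-neighbor path of length `k` staying in `S`. -/
def IsPathIn {d : ℕ} (S : Set (Fin d → ℤ)) (γ : ℕ → Fin d → ℤ) (k : ℕ) : Prop :=
  (∀ i ≤ k, γ i ∈ S) ∧ ∀ i < k, latAdj (γ i) (γ (i + 1))

/-- `x` and `y` are connected by a nearest-neighbor path inside `S`. -/
def ConnIn {d : ℕ} (S : Set (Fin d → ℤ)) (x y : Fin d → ℤ) : Prop :=
  ∃ (γ : ℕ → Fin d → ℤ) (k : ℕ), IsPathIn S γ k ∧ γ 0 = x ∧ γ k = y

/-- A set is connected if any two of its points are joined by a path within it. -/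
def ConnectedSet {d : ℕ} (S : Set (Fin d → ℤ)) : Prop :=
  ∀ x ∈ S, ∀ y ∈ S, ConnIn S x y

def IsStarPathIn {d : ℕ} (S : Set (Fin d → ℤ)) (γ : ℕ → Fin d → ℤ) (k : ℕ) : Prop :=
  (∀ i ≤ k, γ i ∈ S) ∧ ∀ i < k, latAdjStar (γ i) (γ (i + 1))

def StarConnIn {d : ℕ} (S : Set (Fin d → ℤ)) (x y : Fin d → ℤ) : Prop :=
  ∃ (γ : ℕ → Fin d → ℤ) (k : ℕ), IsStarPathIn S γ k ∧ γ 0 = x ∧ γ k = y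

def StarConnectedSet {d : ℕ} (S : Set (Fin d → ℤ)) : Prop :=
  ∀ x ∈ S, ∀ y ∈ S, StarConnIn S x y

/-- The connected component of `x` within `S`. -/
def connComp {d : ℕ} (S : Set (Fin d → ℤ)) (x : Fin d → ℤ) : Set (Fin d → ℤ) :=
  {y | ConnIn S x y}

def starConnComp {d : ℕ} (S : Set (Fin d → ℤ)) (x : Fin d → ℤ) : Set (Fin d → ℤ) :=
  {y | StarConnIn S x y}

/-- Inner vertex boundary. -/
def innerBd {d : ℕ} (S : Set (Fin d → ℤ)) : Set (Fin d → ℤ) :=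
  {x | x ∈ S ∧ ∃ y, y ∉ S ∧ latAdj x y}

/-- Outer vertex boundary. -/
def outerBd {d : ℕ} (S : Set (Fin d → ℤ)) : Set (Fin d → ℤ) :=
  {x | x ∉ S ∧ ∃ y ∈ S, latAdj x y}

/-- Closure: a set together with its outer boundary. -/
def clo {d : ℕ} (S : Set (Fin d → ℤ)) : Set (Fin d → ℤ) := S ∪ outerBd S

/-- `fill U`: union of `U` with all finite connected components of its complement. -/
def fill {d : ℕ} (U : Set (Fin d → ℤ)) : Set (Fin d → ℤ) :=
  U ∪ {x | x ∉ U ∧ (connComp Uᶜ x).Finite}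

/-- `Surr U A`: `U` is surrounded by `A`, i.e. every infinite connected set meeting `U`
meets `A`. -/
def Surr {d : ℕ} (U A : Set (Fin d → ℤ)) : Prop :=
  ∀ S : Set (Fin d → ℤ), S.Infinite → ConnectedSet S → (S ∩ U).Nonempty → (S ∩ A).Nonempty

/-- Euclidean norm of a lattice point. -/
noncomputable def eucNorm {d : ℕ} (x : Fin d → ℤ) : ℝ :=
  Real.sqrt (∑ i : Fin d, ((x i : ℝ)) ^ 2)

/-- The range of a path of length `k`. -/
def pathPts {d : ℕ} (γ : ℕ → Fin d → ℤ) (k : ℕ) : Set (Fin d → ℤ) :=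
  {p | ∃ i ≤ k, γ i = p}

/-- The exterior boundary of `U`: the inner boundary of the union of the infinite
connected components of `Uᶜ`. -/
def extBd {d : ℕ} (U : Set (Fin d → ℤ)) : Set (Fin d → ℤ) :=
  innerBd {x | x ∉ U ∧ (connComp Uᶜ x).Infinite}

lemma latAdj_symm {d : ℕ} {x y : Fin d → ℤ} (h : latAdj x y) : latAdj y x := by
  unfold latAdj at *
  simpa [abs_sub_comm] using h

lemma connIn_mono {d : ℕ} {S T : Set (Fin d → ℤ)} (hST : S ⊆ T) {x y : Fin d → ℤ}
    (h : ConnIn S x y) : ConnIn T x y := by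
  obtain ⟨γ, k, ⟨hm, ha⟩, h0, hk⟩ := h
  exact ⟨γ, k, ⟨fun i hi => hST (hm i hi), ha⟩, h0, hk⟩

lemma connIn_trans {d : ℕ} {S : Set (Fin d → ℤ)} {x y z : Fin d → ℤ}
    (h1 : ConnIn S x y) (h2 : ConnIn S y z) : ConnIn S x z := by
  obtain ⟨γ1, k1, ⟨hm1, ha1⟩, h10, h1k⟩ := h1
  obtain ⟨γ2, k2, ⟨hm2, ha2⟩, h20, h2k⟩ := h2
  refine ⟨fun i => if i < k1 then γ1 i else γ2 (i - k1), k1 + k2, ⟨?_, ?_⟩, ?_, ?_⟩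
  · intro i hi
    by_cases h : i < k1
    · simpa [h] using hm1 i h.le
    · simpa [h] using hm2 (i - k1) (by omega)
  · intro i hi
    by_cases h : i + 1 < k1
    · have hi1 : i < k1 := by omega
      simpa [h, hi1] using ha1 i hi1
    · by_cases h' : i < k1
      · have hk1 : i + 1 = k1 := by omega
        have he : γ2 (i + 1 - k1) = γ1 (i + 1) := by
          rw [show i + 1 - k1 = 0 from by omega, h20, ← h1k, hk1]
        simp only [if_pos h', if_neg h]
        rw [he]
        exact ha1 i h'
      · have he : i + 1 - k1 = (i - k1) + 1 := by omega
        simp only [if_neg h, if_neg h']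
        rw [he]
        exact ha2 (i - k1) (by omega)
  · by_cases h : 0 < k1
    · simpa [h] using h10
    · have hk0 : k1 = 0 := by omega
      simp only [if_neg h]
      rw [hk0, h20, ← h1k, hk0, h10]
  · have h : ¬ (k1 + k2 < k1) := by omega
    simp only [if_neg h]
    rw [show k1 + k2 - k1 = k2 from by omega, h2k]

lemma connIn_symm {d : ℕ} {S : Set (Fin d → ℤ)} {x y : Fin d → ℤ}
    (h : ConnIn S x y) : ConnIn S y x := by
  obtain ⟨γ, k, ⟨hm, ha⟩, h0, hk⟩ := h
  refine ⟨fun i => γ (k - i), k, ⟨fun i _ => hm (k - i) (by omega), ?_⟩, by simpa, by simpa⟩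
  intro i hi
  have h1 : k - i = (k - (i + 1)) + 1 := by omega
  have h2 := ha (k - (i + 1)) (by omega)
  show latAdj (γ (k - i)) (γ (k - (i + 1)))
  rw [h1]
  exact latAdj_symm h2

lemma ray_inf {d : ℕ} {U : Set (Fin d → ℤ)} {M : ℤ}
    (hM : ∀ u ∈ U, ∀ i, |u i| ≤ M) {x : Fin d → ℤ} {j : Fin d} (hx : M < |x j|) :
    (connComp Uᶜ x).Infinite := by
  set s : ℤ := if 0 ≤ x j then 1 else -1 with hs
  have hs1 : s = 1 ∨ s = -1 := by rw [hs]; split <;> simp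
  set r : ℕ → Fin d → ℤ := fun n => Function.update x j (x j + s * n) with hr
  have hbig : ∀ n : ℕ, M < |x j + s * n| := by
    intro n
    have hn : (0 : ℤ) ≤ (n : ℤ) := Int.natCast_nonneg n
    rcases le_or_gt 0 (x j) with h0 | h0
    · have hs' : s = 1 := by rw [hs]; exact if_pos h0
      have h1 : |x j| = x j := abs_of_nonneg h0
      have h2 : |x j + s * n| = x j + n := by
        rw [hs', abs_of_nonneg (by omega : (0:ℤ) ≤ x j + 1 * (n:ℤ))]; ring
      rw [h2]; rw [h1] at hx; omega
    · have hs' : s = -1 := by rw [hs]; exact if_neg (not_le.mpr h0)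
      have h1 : |x j| = -x j := abs_of_neg h0
      have h2 : |x j + s * n| = -(x j) + n := by
        rw [hs', abs_of_nonpos (by omega : x j + (-1) * (n:ℤ) ≤ 0)]; ring
      rw [h2]; rw [h1] at hx; omega
  have hnU : ∀ n : ℕ, r n ∉ U := by
    intro n hn
    have h1 := hM _ hn j
    have hj : r n j = x j + s * n := by rw [hr]; simp
    rw [hj] at h1
    exact absurd h1 (not_le.mpr (hbig n))
  have hconn : ∀ n : ℕ, r n ∈ connComp Uᶜ x := by
    intro n
    have hr0 : r 0 = x := by rw [hr]; simp
    refine ⟨r, n, ⟨fun i _ => hnU i, ?_⟩, hr0, rfl⟩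
    intro i _
    unfold latAdj
    have key : ∀ m, |r i m - r (i + 1) m| = if m = j then 1 else 0 := by
      intro m
      simp only [hr, Function.update_apply]
      by_cases hmj : m = j
      · simp only [if_pos hmj]
        have he : (x j + s * (i:ℕ)) - (x j + s * ((i:ℕ)+1 : ℕ)) = -s := by push_cast; ring
        rw [he]
        rcases hs1 with h | h <;> simp [h]
      · simp [hmj]
    rw [Finset.sum_congr rfl fun m _ => key m,
      Finset.sum_ite_eq' Finset.univ j (fun _ => (1:ℤ))]
    simp
  have hinj : Function.Injective r := by
    intro a b hab
    have h1 := congrFun hab j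
    simp only [hr, Function.update_self] at h1
    have h2 : s * a = s * b := by omega
    have hsne : s ≠ 0 := by rcases hs1 with h | h <;> simp [h]
    exact_mod_cast mul_left_cancel₀ hsne h2
  exact Set.infinite_of_injective_forall_mem hinj hconn

/-- For finite `U ⊆ ℤ^d`: (i) every finite connected component of `Uᶜ` is surrounded by
`U`; (ii) `U` is surrounded by its exterior boundary. -/
theorem finite_components_surrounded_and_surr_extBd {d : ℕ}
    (U : Set (Fin d → ℤ)) (hUfin : U.Finite) :
    (∀ x : Fin d → ℤ, x ∉ U → (connComp Uᶜ x).Finite → Surr (connComp Uᶜ x) U) ∧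
    Surr U (extBd U) := by
  classical
  constructor
  · -- part (i)
    intro x hxU hfin S hSinf hSconn ⟨p, hpS, hpC⟩
    by_contra hne
    rw [Set.not_nonempty_iff_eq_empty] at hne
    have hSU : S ⊆ Uᶜ := by
      intro s hs hsU
      exact absurd (Set.mem_inter hs hsU) (by rw [hne]; exact Set.notMem_empty s)
    have hsub : S ⊆ connComp Uᶜ x := by
      intro q hq
      exact connIn_trans hpC (connIn_mono hSU (hSconn p hpS q hq))
    exact hSinf (hfin.subset hsub)
  · -- part (ii)
    intro S hSinf hSconn ⟨p, hpS, hpU⟩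
    obtain ⟨M, hM⟩ : ∃ M : ℤ, ∀ u ∈ U, ∀ i, |u i| ≤ M := by
      have hfin : ((fun q : ((Fin d → ℤ) × Fin d) => |q.1 q.2|) '' (U ×ˢ Set.univ)).Finite :=
        (hUfin.prod Set.finite_univ).image _
      obtain ⟨M, hM⟩ := hfin.bddAbove
      exact ⟨M, fun u hu i => hM ⟨(u, i), ⟨hu, trivial⟩, rfl⟩⟩
    have hbox : (Set.pi Set.univ fun _ : Fin d => Set.Icc (-M) M).Finite :=
      Set.Finite.pi fun _ => Set.finite_Icc _ _
    obtain ⟨q, hqS, hqbox⟩ : ∃ q ∈ S, q ∉ Set.pi Set.univ fun _ : Fin d => Set.Icc (-M) M := by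
      by_contra h
      push_neg at h
      exact hSinf (hbox.subset h)
    obtain ⟨j, hj⟩ : ∃ j : Fin d, M < |q j| := by
      rw [Set.mem_pi] at hqbox
      push_neg at hqbox
      obtain ⟨j, _, hj⟩ := hqbox
      rw [Set.mem_Icc] at hj
      refine ⟨j, ?_⟩
      rcases abs_cases (q j) with ⟨h, _⟩ | ⟨h, _⟩ <;> rw [h] <;> omega
    have hqU : q ∉ U := fun h => absurd (hM q h j) (not_le.mpr hj)
    have hqinf : (connComp Uᶜ q).Infinite := ray_inf hM hj
    obtain ⟨γ, k, ⟨hm, ha⟩, hγ0, hγk⟩ := hSconn q hqS p hpS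
    have hex : ∃ i, γ i ∈ U := ⟨k, by rw [hγk]; exact hpU⟩
    set i₀ := Nat.find hex with hi₀def
    have hi₀U : γ i₀ ∈ U := Nat.find_spec hex
    have hi₀k : i₀ ≤ k := Nat.find_min' hex (by rw [hγk]; exact hpU)
    have hi₀pos : 0 < i₀ := by
      rcases Nat.eq_zero_or_pos i₀ with h | h
      · exact absurd (h ▸ hi₀U) (by rw [hγ0]; exact hqU)
      · exact h
    have hnotU : ∀ i < i₀, γ i ∉ U := fun i hi => Nat.find_min hex hi
    set z := γ (i₀ - 1) with hz
    have hzU : z ∉ U := hnotU _ (by omega)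
    have hqz : ConnIn Uᶜ q z :=
      ⟨γ, i₀ - 1, ⟨fun i hi => hnotU i (by omega), fun i hi => ha i (by omega)⟩, hγ0, rfl⟩
    have hzinf : (connComp Uᶜ z).Infinite :=
      Set.Infinite.mono (fun w hw => connIn_trans (connIn_symm hqz) hw) hqinf
    have hadj : latAdj z (γ i₀) := by
      have := ha (i₀ - 1) (by omega)
      rwa [show i₀ - 1 + 1 = i₀ from by omega] at this
    refine ⟨z, hm (i₀ - 1) (by omega), ⟨hzU, hzinf⟩, γ i₀, ?_, hadj⟩
    exact fun h => h.1 hi₀U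
end

section
/- If U is a finite connected subset of Z^d with d >= 2 (or more generally a finite connected subset with Z^d \ U having a nonempty infinite component), then the exterior boundary partial^ext U, defined as the inner boundary of the unique infinite connected component of U^c, is a nonempty *-connected subset of Z^d. -/
/-!
Let `C` be the component of `Uᶜ` through `x`. Then `C` is connected, and so is `Cᶜ`: a point of
`Cᶜ` reaches the connected set `U` without entering `C`. Since `innerBd C = outerBd Cᶜ`, it
suffices to show that the outer boundary of a set `A` with `A` and `Aᶜ` connected is
`*`-connected. Fix `x ∈ outerBd A` with `*`-component `K` in `outerBd A`, and count, mod 2, the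
steps of a walk that cross between `A` and `Aᶜ` with outer endpoint in `K`. The corners of a unit
square are pairwise `*`-adjacent, so the crossing edges of a square are all marked or all
unmarked and the count is even around every square; as every closed walk in `ℤ^d` is undone by
swapping and cancelling steps, the count is even around every closed walk.
-/

open scoped BigOperators

section RelationalPaths

variable {α : Type*} {r : α → α → Prop} {S T : Set α} {x y z : α}

def IsRelPathIn (r : α → α → Prop) (S : Set α) (γ : ℕ → α) (k : ℕ) : Prop :=
  (∀ i ≤ k, γ i ∈ S) ∧ ∀ i < k, r (γ i) (γ (i + 1))

/-- `ConnIn` and `StarConnIn` are `RelConnIn latAdj` and `RelConnIn latAdjStar`, definitionally. -/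
def RelConnIn (r : α → α → Prop) (S : Set α) (x y : α) : Prop :=
  ∃ (γ : ℕ → α) (k : ℕ), IsRelPathIn r S γ k ∧ γ 0 = x ∧ γ k = y

namespace RelConnIn

theorem refl (hx : x ∈ S) : RelConnIn r S x x :=
  ⟨fun _ => x, 0, ⟨fun _ _ => hx, fun _ h => absurd h (Nat.not_lt_zero _)⟩, rfl, rfl⟩

theorem mem_right (h : RelConnIn r S x y) : y ∈ S := by
  obtain ⟨γ, k, ⟨hγS, -⟩, -, rfl⟩ := h
  exact hγS k le_rfl

theorem single (hx : x ∈ S) (hy : y ∈ S) (hxy : r x y) : RelConnIn r S x y := by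
  refine ⟨fun i => if i = 0 then x else y, 1, ⟨fun i _ => ?_, fun i hi => ?_⟩, rfl, rfl⟩
  · dsimp only
    split_ifs <;> assumption
  · obtain rfl : i = 0 := by omega
    exact hxy

theorem trans (hxy : RelConnIn r S x y) (hyz : RelConnIn r S y z) : RelConnIn r S x z := by
  obtain ⟨γ, k, ⟨hγS, hγr⟩, rfl, rfl⟩ := hxy
  obtain ⟨δ, l, ⟨hδS, hδr⟩, hδ0, rfl⟩ := hyz
  refine ⟨fun i => if i ≤ k then γ i else δ (i - k), k + l, ⟨fun i hi => ?_, fun i hi => ?_⟩,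
    by simp, ?_⟩
  · dsimp only
    split_ifs with h
    · exact hγS i h
    · exact hδS (i - k) (by omega)
  · dsimp only
    rcases lt_trichotomy i k with h | rfl | h
    · rw [if_pos h.le, if_pos (show i + 1 ≤ k by omega)]
      exact hγr i h
    · rw [if_pos le_rfl, if_neg (by omega), Nat.add_sub_cancel_left, ← hδ0]
      exact hδr 0 (by omega)
    · rw [if_neg (by omega), if_neg (by omega), show i + 1 - k = i - k + 1 by omega]
      exact hδr (i - k) (by omega)
  · dsimp only
    split_ifs with h
    · obtain rfl : l = 0 := by omega
      exact hδ0.symm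
    · simp

theorem snoc (hxy : RelConnIn r S x y) (hz : z ∈ S) (hyz : r y z) : RelConnIn r S x z :=
  hxy.trans (single hxy.mem_right hz hyz)

theorem symm (hr : ∀ a b, r a b → r b a) (h : RelConnIn r S x y) : RelConnIn r S y x := by
  obtain ⟨γ, k, ⟨hγS, hγr⟩, rfl, rfl⟩ := h
  refine ⟨fun i => γ (k - i), k, ⟨fun i _ => hγS _ (by omega), fun i hi => ?_⟩, rfl, by simp⟩
  have h := hr _ _ (hγr (k - (i + 1)) (by omega))
  rwa [show k - (i + 1) + 1 = k - i by omega] at h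

theorem mono (hST : S ⊆ T) (h : RelConnIn r S x y) : RelConnIn r T x y := by
  obtain ⟨γ, k, ⟨hγS, hγr⟩, h0, hk⟩ := h
  exact ⟨γ, k, ⟨fun i hi => hST (hγS i hi), hγr⟩, h0, hk⟩

theorem subset_component (h : RelConnIn r S x y) : RelConnIn r {p | RelConnIn r S x p} x y := by
  obtain ⟨γ, k, ⟨hγS, hγr⟩, rfl, rfl⟩ := h
  refine ⟨γ, k, ⟨fun i hi => ?_, hγr⟩, rfl, rfl⟩
  exact ⟨γ, i, ⟨fun j hj => hγS j (hj.trans hi), fun j hj => hγr j (by omega)⟩, rfl, rfl⟩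

end RelConnIn

end RelationalPaths

section LatticeConnectivity

variable {d : ℕ} {S U : Set (Fin d → ℤ)} {x y z u : Fin d → ℤ}

theorem latAdj.symm (h : latAdj x y) : latAdj y x := by
  unfold latAdj at *
  simpa only [abs_sub_comm] using h

theorem ConnIn.symm (h : ConnIn S x y) : ConnIn S y x :=
  RelConnIn.symm (fun _ _ => latAdj.symm) h

theorem connectedSet_connComp (S : Set (Fin d → ℤ)) (x : Fin d → ℤ) :
    ConnectedSet (connComp S x) := fun _ hy _ hz =>
  RelConnIn.trans (ConnIn.symm (RelConnIn.subset_component hy)) (RelConnIn.subset_component hz)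

theorem connComp_subset_compl_connComp (h : z ∉ connComp S x) :
    connComp S z ⊆ (connComp S x)ᶜ := fun _ hzw hxw =>
  h (RelConnIn.trans hxw (ConnIn.symm hzw))

theorem exists_latAdj_dist_lt (h : x ≠ y) :
    ∃ x', latAdj x x' ∧ ∑ i, (x' i - y i).natAbs < ∑ i, (x i - y i).natAbs := by
  obtain ⟨i, hi⟩ := Function.ne_iff.1 h
  have hsign : |(y i - x i).sign| = 1 := Int.abs_sign_of_ne_zero (sub_ne_zero.2 hi.symm)
  have hcloser : (x i + (y i - x i).sign - y i).natAbs < (x i - y i).natAbs := by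
    rcases lt_or_gt_of_ne hi with hlt | hlt
    · rw [Int.sign_eq_one_of_pos (by omega)]; omega
    · rw [Int.sign_eq_neg_one_of_neg (by omega)]; omega
  refine ⟨Function.update x i (x i + (y i - x i).sign), ?_,
    Finset.sum_lt_sum (fun j _ => ?_) ⟨i, Finset.mem_univ i, by simpa using hcloser⟩⟩
  · rw [latAdj, Finset.sum_eq_single i (fun j _ hj => by simp [hj]) (by simp)]
    simpa using hsign
  · rcases eq_or_ne j i with rfl | hj
    · simpa using hcloser.le
    · simp [hj]

theorem connIn_univ (x y : Fin d → ℤ) : ConnIn Set.univ x y := by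
  by_cases hxy : x = y
  · exact hxy ▸ RelConnIn.refl (Set.mem_univ x)
  obtain ⟨x', hxx', hlt⟩ := exists_latAdj_dist_lt hxy
  exact RelConnIn.trans (RelConnIn.single trivial trivial hxx') (connIn_univ x' y)
termination_by ∑ i, (x i - y i).natAbs

theorem exists_connIn_latAdj_notMem (hx : x ∈ S) (hy : y ∉ S) :
    ∃ p q, ConnIn S x p ∧ q ∉ S ∧ latAdj p q := by
  classical
  obtain ⟨γ, k, ⟨-, hγ⟩, rfl, rfl⟩ := connIn_univ x y
  have hexit : ∃ j, γ j ∉ S := ⟨k, hy⟩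
  obtain ⟨j, hj⟩ : ∃ j, Nat.find hexit = j + 1 :=
    Nat.exists_eq_succ_of_ne_zero fun h0 => Nat.find_spec hexit (h0 ▸ hx)
  have hjk : j + 1 ≤ k := hj ▸ Nat.find_min' hexit hy
  have hprefix : ∀ i ≤ j, γ i ∈ S := fun i hi => not_not.1 (Nat.find_min hexit (by omega))
  exact ⟨γ j, γ (j + 1), ⟨γ, j, ⟨hprefix, fun i hi => hγ i (by omega)⟩, rfl, rfl⟩,
    hj ▸ Nat.find_spec hexit, hγ j (by omega)⟩

theorem innerBd_nonempty (hx : x ∈ S) (hy : y ∉ S) : (innerBd S).Nonempty :=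
  let ⟨p, q, hxp, hq, hpq⟩ := exists_connIn_latAdj_notMem hx hy
  ⟨p, RelConnIn.mem_right hxp, q, hq, hpq⟩

theorem innerBd_eq_outerBd_compl (S : Set (Fin d → ℤ)) : innerBd S = outerBd Sᶜ := by
  ext p
  simp [innerBd, outerBd]

/-- A point outside the component `connComp Uᶜ x` either lies in `U` or reaches `U` through its
own component of `Uᶜ`, which avoids `connComp Uᶜ x`. -/
theorem connIn_compl_connComp (hU : ConnectedSet U) (hu : u ∈ U) (hz : z ∉ connComp Uᶜ x) :
    ConnIn (connComp Uᶜ x)ᶜ z u := by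
  have hUC : U ⊆ (connComp Uᶜ x)ᶜ := fun v hv hvC => RelConnIn.mem_right hvC hv
  by_cases hzU : z ∈ U
  · exact RelConnIn.mono hUC (hU z hzU u hu)
  obtain ⟨p, q, hzp, hqU, hpq⟩ := exists_connIn_latAdj_notMem (S := Uᶜ) hzU (not_not.2 hu)
  have hq : q ∈ U := not_not.1 hqU
  have hzp' : ConnIn (connComp Uᶜ x)ᶜ z p :=
    RelConnIn.mono (connComp_subset_compl_connComp hz) (RelConnIn.subset_component hzp)
  exact RelConnIn.trans (RelConnIn.snoc hzp' (hUC hq) hpq) (RelConnIn.mono hUC (hU q hq u hu))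

theorem connectedSet_compl_connComp (hU : ConnectedSet U) (hu : u ∈ U) (x : Fin d → ℤ) :
    ConnectedSet (connComp Uᶜ x)ᶜ := fun _ hz _ hw =>
  RelConnIn.trans (connIn_compl_connComp hU hu hz) (connIn_compl_connComp hU hu hw).symm

end LatticeConnectivity

section UnitSteps

variable {d : ℕ} {x y s t : Fin d → ℤ} {i j : Fin d}

def IsUnitStep (s : Fin d → ℤ) : Prop := ∑ i, |s i| = 1

theorem latAdj_iff_isUnitStep_sub : latAdj x y ↔ IsUnitStep (y - x) := by
  simp only [latAdj, IsUnitStep, Pi.sub_apply]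
  rw [Finset.sum_congr rfl fun i _ => abs_sub_comm (x i) (y i)]

theorem latAdj_add (hs : IsUnitStep s) (x : Fin d → ℤ) : latAdj x (x + s) :=
  latAdj_iff_isUnitStep_sub.2 (by simpa using hs)

namespace IsUnitStep

theorem abs_le (hs : IsUnitStep s) (i : Fin d) : |s i| ≤ 1 :=
  hs ▸ Finset.single_le_sum (fun j _ => abs_nonneg (s j)) (Finset.mem_univ i)

theorem abs_eq_one (hs : IsUnitStep s) (hi : s i ≠ 0) : |s i| = 1 :=
  le_antisymm (hs.abs_le i) (Int.one_le_abs hi)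

theorem eq_zero_of_ne (hs : IsUnitStep s) (hi : s i ≠ 0) (hji : j ≠ i) : s j = 0 := by
  by_contra hj
  have h := Finset.add_le_sum (fun k _ => abs_nonneg (s k)) (Finset.mem_univ i)
    (Finset.mem_univ j) hji.symm
  rw [hs, hs.abs_eq_one hi, hs.abs_eq_one hj] at h
  omega

theorem neg (hs : IsUnitStep s) : IsUnitStep (-s) := by
  simpa [IsUnitStep] using hs

theorem exists_ne_zero (hs : IsUnitStep s) : ∃ i, s i ≠ 0 := by
  by_contra! h
  simp [IsUnitStep, h] at hs

theorem eq_of_apply_eq (hs : IsUnitStep s) (ht : IsUnitStep t) (hi : s i ≠ 0) (h : s i = t i) :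
    s = t := by
  funext j
  rcases eq_or_ne j i with rfl | hji
  · exact h
  · rw [hs.eq_zero_of_ne hi hji, ht.eq_zero_of_ne (h ▸ hi) hji]

theorem eq_or_eq_neg_of_apply_ne_zero (hs : IsUnitStep s) (ht : IsUnitStep t) (hsi : s i ≠ 0)
    (hti : t i ≠ 0) : t = s ∨ t = -s := by
  rcases abs_eq_abs.1 ((ht.abs_eq_one hti).trans (hs.abs_eq_one hsi).symm) with h | h
  · exact Or.inl (ht.eq_of_apply_eq hs hti h)
  · exact Or.inr (ht.eq_of_apply_eq hs.neg hti h)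

end IsUnitStep

/-- In a closed walk of unit steps, every step is undone by some other step: along a coordinate
where `s` moves, the other steps must move back. -/
theorem neg_mem_of_add_sum_eq_zero {L : List (Fin d → ℤ)} (hs : IsUnitStep s)
    (hL : ∀ v ∈ L, IsUnitStep v) (hsum : s + L.sum = 0) : -s ∈ L := by
  obtain ⟨j, hj⟩ := hs.exists_ne_zero
  by_contra hneg
  have hsame_sign : ∀ v ∈ L, 0 ≤ s j * v j := by
    intro v hv
    by_cases hvj : v j = 0
    · simp [hvj]
    rcases hs.eq_or_eq_neg_of_apply_ne_zero (hL v hv) hj hvj with rfl | rfl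
    · exact mul_self_nonneg _
    · exact absurd hv hneg
  have hback : L.sum j = -s j := eq_neg_of_add_eq_zero_right (congrFun hsum j)
  have hnonneg : 0 ≤ s j * L.sum j := by
    rw [Pi.list_sum_apply, ← List.sum_map_mul_left]
    exact List.sum_nonneg (by simpa using hsame_sign)
  rw [hback, mul_neg, ← abs_mul_abs_self, hs.abs_eq_one hj] at hnonneg
  omega

end UnitSteps

section ClosedWalks

variable {d : ℕ} {ω : (Fin d → ℤ) → (Fin d → ℤ) → ℕ}

def walkWeight (ω : (Fin d → ℤ) → (Fin d → ℤ) → ℕ) : (Fin d → ℤ) → List (Fin d → ℤ) → ℕ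
  | _, [] => 0
  | x, s :: L => ω x (x + s) + walkWeight ω (x + s) L

theorem walkWeight_append (x : Fin d → ℤ) (L₁ L₂ : List (Fin d → ℤ)) :
    walkWeight ω x (L₁ ++ L₂) = walkWeight ω x L₁ + walkWeight ω (x + L₁.sum) L₂ := by
  induction L₁ generalizing x with
  | nil => simp [walkWeight]
  | cons s L₁ ih => simp only [List.cons_append, walkWeight, ih, List.sum_cons, add_assoc]

def IsParityCocycle (ω : (Fin d → ℤ) → (Fin d → ℤ) → ℕ) : Prop :=
  (∀ p q, ω p q = ω q p) ∧
    ∀ x s t, IsUnitStep s → IsUnitStep t → (∀ i, s i = 0 ∨ t i = 0) →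
      (ω x (x + s) + ω (x + s) (x + s + t)) % 2 = (ω x (x + t) + ω (x + t) (x + s + t)) % 2

namespace IsParityCocycle

variable {s t : Fin d → ℤ}

theorem walkWeight_swap (hω : IsParityCocycle ω) (hs : IsUnitStep s) (ht : IsUnitStep t)
    (x : Fin d → ℤ) (L : List (Fin d → ℤ)) :
    walkWeight ω x (s :: t :: L) % 2 = walkWeight ω x (t :: s :: L) % 2 := by
  simp only [walkWeight, add_right_comm x t s]
  by_cases hd : ∀ i, s i = 0 ∨ t i = 0
  · have := hω.2 x s t hs ht hd
    omega
  push Not at hd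
  obtain ⟨i, hsi, hti⟩ := hd
  rcases hs.eq_or_eq_neg_of_apply_ne_zero ht hsi hti with rfl | rfl
  · rfl
  · simp only [add_neg_cancel_right, hω.1 (x + s) x, hω.1 (x + -s) x]
    omega

theorem walkWeight_perm (hω : IsParityCocycle ω) {L L' : List (Fin d → ℤ)} (h : L.Perm L')
    (hL : ∀ v ∈ L, IsUnitStep v) (x : Fin d → ℤ) :
    walkWeight ω x L % 2 = walkWeight ω x L' % 2 := by
  induction h generalizing x with
  | nil => rfl
  | cons v _ ih =>
    have := ih (fun w hw => hL w (List.mem_cons_of_mem v hw)) (x + v)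
    simp only [walkWeight]
    omega
  | swap s t L => exact hω.walkWeight_swap (hL t (by simp)) (hL s (by simp)) x L
  | trans h₁₂ _ ih₁₂ ih₂₃ =>
    exact (ih₁₂ hL x).trans (ih₂₃ (fun v hv => hL v (h₁₂.symm.subset hv)) x)

/-- Closed walks have even weight: reorder the steps so that a step and its inverse (which exists
by `neg_mem_of_add_sum_eq_zero`) are adjacent, cancel them, and recurse. -/
theorem walkWeight_mod_two_eq_zero (hω : IsParityCocycle ω) (L : List (Fin d → ℤ))
    (hL : ∀ v ∈ L, IsUnitStep v) (hsum : L.sum = 0) (x : Fin d → ℤ) :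
    walkWeight ω x L % 2 = 0 := by
  match L, hL, hsum with
  | [], _, _ => rfl
  | v :: L, hL, hsum =>
    have hLunit : ∀ w ∈ L, IsUnitStep w := fun w hw => hL w (List.mem_cons_of_mem v hw)
    have hmem : -v ∈ L :=
      neg_mem_of_add_sum_eq_zero (hL v List.mem_cons_self) hLunit (by simpa using hsum)
    have hperm : (v :: L).Perm (v :: -v :: L.erase (-v)) := (List.perm_cons_erase hmem).cons v
    have hrest : (L.erase (-v)).sum = 0 := by simpa using hperm.sum_eq.symm.trans hsum
    have := walkWeight_mod_two_eq_zero hω (L.erase (-v))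
      (fun w hw => hLunit w (List.erase_subset hw)) hrest x
    rw [hω.walkWeight_perm hperm hL]
    simp only [walkWeight, add_neg_cancel_right, hω.1 (x + v) x]
    omega
termination_by L.length
decreasing_by simp [List.length_erase_of_mem hmem]

end IsParityCocycle

def pathSteps (γ : ℕ → Fin d → ℤ) (k : ℕ) : List (Fin d → ℤ) :=
  (List.range k).map fun i => γ (i + 1) - γ i

variable {γ : ℕ → Fin d → ℤ} {k : ℕ}

theorem pathSteps_succ : pathSteps γ (k + 1) = pathSteps γ k ++ [γ (k + 1) - γ k] := by
  simp [pathSteps, List.range_succ]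

theorem sum_pathSteps : (pathSteps γ k).sum = γ k - γ 0 := by
  induction k with
  | zero => simp [pathSteps]
  | succ k ih => rw [pathSteps_succ, List.sum_append, ih]; simp

theorem isUnitStep_of_mem_pathSteps (hγ : ∀ i < k, latAdj (γ i) (γ (i + 1))) :
    ∀ v ∈ pathSteps γ k, IsUnitStep v := by
  simp only [pathSteps, List.mem_map, List.mem_range]
  rintro _ ⟨i, hi, rfl⟩
  exact latAdj_iff_isUnitStep_sub.1 (hγ i hi)

theorem walkWeight_pathSteps :
    walkWeight ω (γ 0) (pathSteps γ k) = ∑ i ∈ Finset.range k, ω (γ i) (γ (i + 1)) := by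
  induction k with
  | zero => simp [pathSteps, walkWeight]
  | succ k ih =>
    rw [pathSteps_succ, walkWeight_append, ih, sum_pathSteps, Finset.sum_range_succ]
    simp [walkWeight]

end ClosedWalks

section MarkedCrossings

variable {α : Type*} {A K : Set α} {p q : α}

open Classical in
noncomputable def crossing (A : Set α) (p q : α) : ℕ := if (p ∈ A ↔ q ∈ A) then 0 else 1

open Classical in
/-- Used with `K` a `*`-component of `outerBd A`: an edge of `ℤ^d` that crosses from `A` to `Aᶜ`
is marked when its outer endpoint lies in `K`. -/
noncomputable def markedCross (A K : Set α) (p q : α) : ℕ :=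
  if p ∈ K ∨ q ∈ K then crossing A p q else 0

theorem crossing_comm : crossing A p q = crossing A q p := by
  unfold crossing
  by_cases p ∈ A <;> by_cases q ∈ A <;> simp [*]

theorem crossing_add_crossing_mod_two (A : Set α) (p q r : α) :
    (crossing A p q + crossing A q r) % 2 = crossing A p r % 2 := by
  unfold crossing
  by_cases p ∈ A <;> by_cases q ∈ A <;> by_cases r ∈ A <;> simp [*]

theorem markedCross_comm : markedCross A K p q = markedCross A K q p := by
  unfold markedCross
  rw [crossing_comm]
  by_cases p ∈ K <;> by_cases q ∈ K <;> simp [*]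

theorem markedCross_eq_zero_of_iff (h : p ∈ A ↔ q ∈ A) : markedCross A K p q = 0 := by
  simp [markedCross, crossing, h]

theorem markedCross_eq_zero_of_notMem (hp : p ∉ K) (hq : q ∉ K) : markedCross A K p q = 0 := by
  simp [markedCross, hp, hq]

theorem markedCross_eq_one (hp : p ∈ A) (hq : q ∉ A) (hqK : q ∈ K) : markedCross A K p q = 1 := by
  simp [markedCross, crossing, hp, hq, hqK]

end MarkedCrossings

section StarConnectivity

variable {d : ℕ} {A B K : Set (Fin d → ℤ)} {c p q x s t : Fin d → ℤ}

def IsStarClosedIn (B K : Set (Fin d → ℤ)) : Prop :=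
  K ⊆ B ∧ ∀ q ∈ K, ∀ q' ∈ B, (∀ i, |q i - q' i| ≤ 1) → q' ∈ K

theorem isStarClosedIn_starConnComp (B : Set (Fin d → ℤ)) (x : Fin d → ℤ) :
    IsStarClosedIn B (starConnComp B x) := by
  refine ⟨fun q hq => RelConnIn.mem_right hq, fun q hq q' hq' hqq' => ?_⟩
  rcases eq_or_ne q q' with rfl | hne
  · exact hq
  · exact RelConnIn.snoc hq hq' ⟨hne, hqq'⟩

theorem markedCross_eq_crossing (hK : IsStarClosedIn (outerBd A) K) (hc : c ∈ K)
    (hcp : ∀ i, |c i - p i| ≤ 1) (hcq : ∀ i, |c i - q i| ≤ 1) (hpq : latAdj p q) :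
    markedCross A K p q = crossing A p q := by
  by_cases hpA : p ∈ A <;> by_cases hqA : q ∈ A
  · simp [markedCross, crossing, hpA, hqA]
  · have hq : q ∈ K := hK.2 c hc q ⟨hqA, p, hpA, hpq.symm⟩ hcq
    simp [markedCross, hq]
  · have hp : p ∈ K := hK.2 c hc p ⟨hpA, q, hqA, hpq⟩ hcp
    simp [markedCross, hp]
  · simp [markedCross, crossing, hpA, hqA]

theorem abs_sub_le_one_of_mem_square (hs : IsUnitStep s) (ht : IsUnitStep t)
    (hd : ∀ i, s i = 0 ∨ t i = 0) (hp : p ∈ ({x, x + s, x + t, x + s + t} : Set (Fin d → ℤ)))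
    (hq : q ∈ ({x, x + s, x + t, x + s + t} : Set (Fin d → ℤ))) (i : Fin d) :
    |p i - q i| ≤ 1 := by
  have := abs_le.1 (hs.abs_le i)
  have := abs_le.1 (ht.abs_le i)
  simp only [Set.mem_insert_iff, Set.mem_singleton_iff] at hp hq
  rw [abs_le]
  rcases hd i with h | h <;> rcases hp with rfl | rfl | rfl | rfl <;>
    rcases hq with rfl | rfl | rfl | rfl <;> (try simp only [Pi.add_apply]) <;> omega

/-- The corners of a unit square are pairwise `*`-close, so either all of its crossing edges are
marked, or none is; in both cases the marked crossings around the square are even. -/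
theorem isParityCocycle_markedCross (hK : IsStarClosedIn (outerBd A) K) :
    IsParityCocycle (markedCross A K) := by
  refine ⟨fun p q => markedCross_comm, fun x s t hs ht hd => ?_⟩
  have hts : latAdj (x + t) (x + s + t) := add_right_comm x t s ▸ latAdj_add hs (x + t)
  by_cases hsquare : ∃ c ∈ ({x, x + s, x + t, x + s + t} : Set (Fin d → ℤ)), c ∈ K
  · obtain ⟨c, hc, hcK⟩ := hsquare
    have hcross := fun p (hp : p ∈ ({x, x + s, x + t, x + s + t} : Set (Fin d → ℤ))) q
        (hq : q ∈ ({x, x + s, x + t, x + s + t} : Set (Fin d → ℤ))) =>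
      markedCross_eq_crossing (p := p) (q := q) hK hcK
        (abs_sub_le_one_of_mem_square hs ht hd hc hp) (abs_sub_le_one_of_mem_square hs ht hd hc hq)
    rw [hcross x (by simp) (x + s) (by simp) (latAdj_add hs x),
      hcross (x + s) (by simp) (x + s + t) (by simp) (latAdj_add ht (x + s)),
      hcross x (by simp) (x + t) (by simp) (latAdj_add ht x),
      hcross (x + t) (by simp) (x + s + t) (by simp) hts,
      crossing_add_crossing_mod_two, crossing_add_crossing_mod_two]
  · push Not at hsquare
    simp only [Set.mem_insert_iff, Set.mem_singleton_iff, forall_eq_or_imp, forall_eq]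
      at hsquare
    obtain ⟨h₀, hs, ht, hst⟩ := hsquare
    simp only [markedCross_eq_zero_of_notMem h₀ hs, markedCross_eq_zero_of_notMem hs hst,
      markedCross_eq_zero_of_notMem h₀ ht, markedCross_eq_zero_of_notMem ht hst]

theorem walkWeight_markedCross_pathSteps {γ : ℕ → Fin d → ℤ} {k : ℕ}
    (hγ : ∀ i ≤ k, (γ i ∈ A ↔ γ 0 ∈ A)) :
    walkWeight (markedCross A K) (γ 0) (pathSteps γ k) = 0 := by
  rw [walkWeight_pathSteps]
  exact Finset.sum_eq_zero fun i hi =>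
    markedCross_eq_zero_of_iff ((hγ i (by simp at hi; omega)).trans (hγ (i + 1) (by simp at hi; omega)).symm)

end StarConnectivity

/-- Join `x, y ∈ outerBd A` by the closed walk `x ⇝ y` in `Aᶜ`, `y → b ∈ A`, `b ⇝ a` in `A`,
`a → x`. Marking crossings by the `*`-component `K` of `x`, only the two middle steps cross,
with marks `[y ∈ K]` and `1`; the total is even, so `y ∈ K`. -/
theorem starConnectedSet_outerBd {d : ℕ} {A : Set (Fin d → ℤ)} (hA : ConnectedSet A)
    (hAc : ConnectedSet Aᶜ) : StarConnectedSet (outerBd A) := by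
  intro x hx y hy
  set K := starConnComp (outerBd A) x
  have hK : IsStarClosedIn (outerBd A) K := isStarClosedIn_starConnComp _ x
  have hxK : x ∈ K := RelConnIn.refl hx
  obtain ⟨hxA, a, haA, hxa⟩ := hx
  obtain ⟨hyA, b, hbA, hyb⟩ := hy
  obtain ⟨γ, k, ⟨hγA, hγ⟩, rfl, rfl⟩ := hAc _ hxA _ hyA
  obtain ⟨δ, l, ⟨hδA, hδ⟩, rfl, rfl⟩ := hA _ hbA _ haA
  set L := pathSteps γ k ++ (δ 0 - γ k) :: (pathSteps δ l ++ [γ 0 - δ l])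
  have hLunit : ∀ v ∈ L, IsUnitStep v := by
    simp only [L, List.mem_append, List.mem_cons, List.not_mem_nil, or_false]
    rintro v (hv | rfl | hv | rfl)
    · exact isUnitStep_of_mem_pathSteps hγ v hv
    · exact latAdj_iff_isUnitStep_sub.1 hyb
    · exact isUnitStep_of_mem_pathSteps hδ v hv
    · exact latAdj_iff_isUnitStep_sub.1 hxa.symm
  have hLsum : L.sum = 0 := by
    simp only [L, List.sum_append, List.sum_cons, List.sum_nil, sum_pathSteps]
    abel
  have hweight : walkWeight (markedCross A K) (γ 0) L = markedCross A K (γ k) (δ 0) + 1 := by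
    simp only [L, walkWeight_append, walkWeight, sum_pathSteps, add_sub_cancel,
      walkWeight_markedCross_pathSteps (fun i hi => iff_of_false (hγA i hi) (hγA 0 k.zero_le)),
      walkWeight_markedCross_pathSteps (fun i hi => iff_of_true (hδA i hi) (hδA 0 l.zero_le)),
      markedCross_eq_one haA hxA hxK, zero_add, add_zero]
  have heven := (isParityCocycle_markedCross hK).walkWeight_mod_two_eq_zero L hLunit hLsum (γ 0)
  by_contra hyK
  have := markedCross_eq_zero_of_notMem (A := A) hyK fun hbK => (hK.1 hbK).1 hbA
  omega

theorem extBd_nonempty_starConnected_general {d : ℕ} (U C : Set (Fin d → ℤ))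
    (hUne : U.Nonempty) (hUconn : ConnectedSet U)
    (hC : ∃ x, x ∉ U ∧ C = connComp Uᶜ x) :
    (innerBd C).Nonempty ∧ StarConnectedSet (innerBd C) := by
  obtain ⟨x, hxU, rfl⟩ := hC
  obtain ⟨u, hu⟩ := hUne
  have hxC : x ∈ connComp Uᶜ x := RelConnIn.refl hxU
  have huC : u ∉ connComp Uᶜ x := fun huC => RelConnIn.mem_right huC hu
  refine ⟨innerBd_nonempty hxC huC, ?_⟩
  rw [innerBd_eq_outerBd_compl]
  refine starConnectedSet_outerBd (connectedSet_compl_connComp hUconn hu x) ?_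
  rw [compl_compl]
  exact connectedSet_connComp Uᶜ x

/-- If `U ⊆ ℤ^d` is a finite nonempty connected set such that `Uᶜ` has a unique infinite
connected component `C`, then the exterior boundary of `U` (the inner boundary of `C`)
is nonempty and `*`-connected. -/
theorem extBd_nonempty_starConnected {d : ℕ} (U C : Set (Fin d → ℤ))
    (hUfin : U.Finite) (hUne : U.Nonempty) (hUconn : ConnectedSet U)
    (hC : ∃ x, x ∉ U ∧ C = connComp Uᶜ x) (hCinf : C.Infinite)
    (huniq : ∀ x, x ∉ U → (connComp Uᶜ x).Infinite → connComp Uᶜ x = C) :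
    (innerBd C).Nonempty ∧ StarConnectedSet (innerBd C) :=
  extBd_nonempty_starConnected_general U C hUne hUconn hC
end

section
/- Let S be a compound Poisson random variable: S = T_1 + ... + T_N where N ~ Poisson(lambda), lambda > 0, and (T_i) are i.i.d. exponential with mean 1, independent of N. Then for every theta with 0 < theta < 1, P[S <= theta * lambda] <= exp(-lambda * (1 - sqrt(theta))^2). -/
/-!
Exponential Chebyshev inequality: `P[S ≤ θλ] ≤ e^{aθλ} E[e^{-aS}]` for every `a ≥ 0`.
Conditioning on `N` and using independence, `E[e^{-aS}] = E[(1 + a)^{-N}] = exp(-λa/(1 + a))`,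
and the choice `a = 1/√θ - 1` makes the exponent `aθλ - λa/(1 + a)` equal to `-λ(1 - √θ)²`.
-/

open MeasureTheory ProbabilityTheory

open Real Set
open scoped ENNReal

section Exponential

variable {Ω : Type*} [MeasurableSpace Ω] {μ : Measure Ω}

lemma map_eq_expMeasure [IsProbabilityMeasure μ] {r : ℝ} (hr : 0 < r) {X : Ω → ℝ}
    (hX : Measurable X)
    (hcdf : ∀ t, 0 ≤ t → μ {ω | X ω ≤ t} = ENNReal.ofReal (1 - exp (-(r * t)))) :
    μ.map X = expMeasure r := by
  have := isProbabilityMeasure_expMeasure hr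
  have := Measure.isProbabilityMeasure_map (μ := μ) hX.aemeasurable
  refine Measure.ext_of_Iic _ _ fun t => ?_
  rw [Measure.map_apply hX measurableSet_Iic, ← ofReal_cdf, cdf_expMeasure_eq hr]
  split_ifs with ht
  · exact hcdf t ht
  · have h0 : μ {ω | X ω ≤ 0} = 0 := by simp [hcdf 0 le_rfl]
    exact measure_mono_null (fun ω (hω : X ω ≤ t) => (hω.trans (not_le.1 ht).le : X ω ≤ 0)) h0
      |>.trans ENNReal.ofReal_zero.symm

lemma exponentialPDF_mul_exp_neg_mul {r a : ℝ} (hr : 0 ≤ r) (hra : 0 < r + a) (x : ℝ) :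
    exponentialPDF r x * ENNReal.ofReal (exp (-(a * x))) =
      ENNReal.ofReal (r / (r + a)) * exponentialPDF (r + a) x := by
  rcases lt_or_ge x 0 with hx | hx
  · simp [exponentialPDF_of_neg hx]
  · rw [exponentialPDF_of_nonneg hx, exponentialPDF_of_nonneg hx,
      ← ENNReal.ofReal_mul (by positivity), ← ENNReal.ofReal_mul (by positivity)]
    congr 1
    field_simp
    rw [mul_assoc, ← exp_add]
    ring_nf

lemma lintegral_exp_neg_mul_expMeasure {r a : ℝ} (hr : 0 < r) (hra : 0 < r + a) :
    ∫⁻ x, ENNReal.ofReal (exp (-(a * x))) ∂expMeasure r = ENNReal.ofReal (r / (r + a)) := by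
  have hpdf : Measurable (gammaPDF 1 r) := (measurable_gammaPDFReal 1 r).ennreal_ofReal
  have hpdf' : Measurable (exponentialPDF (r + a)) :=
    (measurable_exponentialPDFReal (r + a)).ennreal_ofReal
  rw [expMeasure, gammaMeasure, lintegral_withDensity_eq_lintegral_mul _ hpdf (by fun_prop)]
  change ∫⁻ x, exponentialPDF r x * _ = _
  simp_rw [exponentialPDF_mul_exp_neg_mul hr.le hra]
  rw [lintegral_const_mul _ hpdf', lintegral_exponentialPDF_eq_one hra, mul_one]

lemma lintegral_exp_neg_mul_of_cdf_eq [IsProbabilityMeasure μ] {r a : ℝ} (hr : 0 < r)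
    (hra : 0 < r + a) {X : Ω → ℝ} (hX : Measurable X)
    (hcdf : ∀ t, 0 ≤ t → μ {ω | X ω ≤ t} = ENNReal.ofReal (1 - exp (-(r * t)))) :
    ∫⁻ ω, ENNReal.ofReal (exp (-(a * X ω))) ∂μ = ENNReal.ofReal (r / (r + a)) := by
  rw [← lintegral_map (f := fun x => ENNReal.ofReal (exp (-(a * x)))) (by fun_prop) hX,
    map_eq_expMeasure hr hX hcdf, lintegral_exp_neg_mul_expMeasure hr hra]

end Exponential

section RandomSum

variable {Ω : Type*} [MeasurableSpace Ω] {μ : Measure Ω}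

lemma lintegral_comp_eq_tsum_of_indepFun [IsFiniteMeasure μ] {ι β : Type*} [Countable ι]
    [MeasurableSpace ι] [MeasurableSingletonClass ι] [MeasurableSpace β] {N : Ω → ι} {Y : Ω → β}
    (hN : Measurable N) (hY : Measurable Y) (hNY : IndepFun N Y μ) {g : ι → β → ℝ≥0∞}
    (hg : ∀ n, Measurable (g n)) :
    ∫⁻ ω, g (N ω) (Y ω) ∂μ = ∑' n, μ (N ⁻¹' {n}) * ∫⁻ ω, g n (Y ω) ∂μ := by
  have hg' : Measurable (Function.uncurry g) := measurable_from_prod_countable_right hg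
  change ∫⁻ ω, Function.uncurry g (N ω, Y ω) ∂μ = _
  rw [← lintegral_map hg' (hN.prodMk hY),
    (indepFun_iff_map_prod_eq_prod_map_map hN.aemeasurable hY.aemeasurable).1 hNY,
    lintegral_prod _ hg'.aemeasurable, lintegral_countable']
  refine tsum_congr fun n => ?_
  rw [Function.uncurry_def, Measure.map_apply hN (measurableSet_singleton n),
    lintegral_map (hg n) hY, mul_comm]

lemma lintegral_prod_range_eq_tsum_pow [IsFiniteMeasure μ] {β : Type*} [MeasurableSpace β]
    {N : Ω → ℕ} {T : ℕ → Ω → β} (hN : Measurable N) (hT : ∀ i, Measurable (T i))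
    (hTiid : iIndepFun T μ) (hNT : IndepFun N (fun ω i => T i ω) μ) {φ : β → ℝ≥0∞}
    (hφ : Measurable φ) {L : ℝ≥0∞} (hL : ∀ i, ∫⁻ ω, φ (T i ω) ∂μ = L) :
    ∫⁻ ω, ∏ i ∈ Finset.range (N ω), φ (T i ω) ∂μ = ∑' n, μ (N ⁻¹' {n}) * L ^ n := by
  rw [lintegral_comp_eq_tsum_of_indepFun (g := fun n v => ∏ i ∈ Finset.range n, φ (v i)) hN
    (measurable_pi_lambda _ hT) hNT (fun n => by fun_prop)]
  refine tsum_congr fun n => ?_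
  rw [lintegral_prod_eq_prod_lintegral_of_indepFun _ (fun i ω => φ (T i ω))
    (hTiid.comp (fun _ => φ) fun _ => hφ) fun i => hφ.comp (hT i)]
  simp [hL]

lemma tsum_poisson_mul_pow {lam z : ℝ} (hlam : 0 ≤ lam) (hz : 0 ≤ z) :
    ∑' n : ℕ, ENNReal.ofReal (exp (-lam) * lam ^ n / n.factorial) * ENNReal.ofReal z ^ n =
      ENNReal.ofReal (exp (lam * (z - 1))) := by
  have hsum : HasSum (fun n : ℕ => exp (-lam) * lam ^ n / n.factorial * z ^ n)
      (exp (lam * (z - 1))) := by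
    have h := (NormedSpace.expSeries_div_hasSum_exp (lam * z)).mul_left (exp (-lam))
    simp only [← exp_eq_exp_ℝ, ← exp_add] at h
    have hterm : (fun n : ℕ => exp (-lam) * lam ^ n / n.factorial * z ^ n) =
        fun n => exp (-lam) * ((lam * z) ^ n / n.factorial) := by
      ext n; rw [mul_pow]; ring
    rwa [hterm, show lam * (z - 1) = -lam + lam * z by ring]
  rw [← hsum.tsum_eq, ENNReal.ofReal_tsum_of_nonneg (fun n => by positivity) hsum.summable]
  refine tsum_congr fun n => ?_
  rw [← ENNReal.ofReal_pow hz, ← ENNReal.ofReal_mul (by positivity)]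

lemma lintegral_exp_neg_mul_sum_range_of_poisson [IsFiniteMeasure μ] {lam : ℝ} (hlam : 0 ≤ lam)
    {N : Ω → ℕ} {T : ℕ → Ω → ℝ} (hNm : Measurable N) (hTm : ∀ i, Measurable (T i))
    (hN : ∀ n : ℕ, μ {ω | N ω = n} = ENNReal.ofReal (exp (-lam) * lam ^ n / n.factorial))
    (hTiid : iIndepFun T μ) (hNT : IndepFun N (fun ω i => T i ω) μ) {a z : ℝ} (hz : 0 ≤ z)
    (hL : ∀ i, ∫⁻ ω, ENNReal.ofReal (exp (-(a * T i ω))) ∂μ = ENNReal.ofReal z) :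
    ∫⁻ ω, ENNReal.ofReal (exp (-(a * ∑ i ∈ Finset.range (N ω), T i ω))) ∂μ =
      ENNReal.ofReal (exp (lam * (z - 1))) := by
  simp_rw [Finset.mul_sum, ← Finset.sum_neg_distrib, exp_sum,
    ENNReal.ofReal_prod_of_nonneg fun _ _ => (exp_pos _).le]
  rw [lintegral_prod_range_eq_tsum_pow (φ := fun x => ENNReal.ofReal (exp (-(a * x)))) hNm hTm
    hTiid hNT (by fun_prop) hL]
  exact (tsum_congr fun n => by rw [← hN n]; rfl).trans (tsum_poisson_mul_pow hlam hz)

end RandomSum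

lemma measure_le_le_exp_mul_lintegral {Ω : Type*} [MeasurableSpace Ω] {μ : Measure Ω}
    {S : Ω → ℝ} (hS : Measurable S) {a : ℝ} (ha : 0 ≤ a) (c : ℝ) :
    μ {ω | S ω ≤ c} ≤
      ENNReal.ofReal (exp (a * c)) * ∫⁻ ω, ENNReal.ofReal (exp (-(a * S ω))) ∂μ := by
  set ε := ENNReal.ofReal (exp (-(a * c)))
  have hsub : {ω | S ω ≤ c} ⊆ {ω | ε ≤ ENNReal.ofReal (exp (-(a * S ω)))} :=
    fun ω (hω : S ω ≤ c) => ENNReal.ofReal_le_ofReal (exp_le_exp.2 (by nlinarith))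
  calc μ {ω | S ω ≤ c} ≤ μ {ω | ε ≤ ENNReal.ofReal (exp (-(a * S ω)))} := measure_mono hsub
    _ = ENNReal.ofReal (exp (a * c)) * (ε * μ {ω | ε ≤ ENNReal.ofReal (exp (-(a * S ω)))}) := by
      rw [← mul_assoc, ← ENNReal.ofReal_mul (exp_pos _).le, ← exp_add, add_neg_cancel, exp_zero,
        ENNReal.ofReal_one, one_mul]
    _ ≤ _ := by
      gcongr
      exact mul_meas_ge_le_lintegral₀ (by fun_prop) ε

/-- Lower-deviation bound for a compound Poisson sum of unit-mean exponentials: if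
`N ~ Poisson(lam)` and `(T i)` are i.i.d. exponential with mean `1`, all jointly
independent, and `S = T 0 + ⋯ + T (N-1)`, then for every `0 < θ < 1`,
`P[S ≤ θ lam] ≤ exp(-lam (1 - √θ)²)`. -/
theorem compound_poisson_lower_tail {Ω : Type*} [MeasurableSpace Ω] (μ : Measure Ω)
    [IsProbabilityMeasure μ] (lam : ℝ) (hlam : 0 < lam)
    (N : Ω → ℕ) (T : ℕ → Ω → ℝ) (hNm : Measurable N) (hTm : ∀ i, Measurable (T i))
    (hN : ∀ n : ℕ, μ {ω | N ω = n} =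
      ENNReal.ofReal (Real.exp (-lam) * lam ^ n / (Nat.factorial n)))
    (hT : ∀ i, ∀ t : ℝ, 0 ≤ t → μ {ω | T i ω ≤ t} = ENNReal.ofReal (1 - Real.exp (-t)))
    (hTiid : iIndepFun T μ)
    (hNT : IndepFun N (fun ω i => T i ω) μ)
    (θ : ℝ) (hθ0 : 0 < θ) (hθ1 : θ < 1) :
    μ {ω | ∑ i ∈ Finset.range (N ω), T i ω ≤ θ * lam} ≤
      ENNReal.ofReal (Real.exp (-lam * (1 - Real.sqrt θ) ^ 2)) := by
  set s := √θ
  have hs0 : 0 < s := sqrt_pos.2 hθ0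
  have hs1 : s < 1 := (sqrt_lt' one_pos).2 (by simpa using hθ1)
  have hθs : θ = s ^ 2 := (sq_sqrt hθ0.le).symm
  set a := s⁻¹ - 1 with ha_def
  have ha : 0 ≤ a := sub_nonneg.2 ((one_le_inv₀ hs0).2 hs1.le)
  have hlaplaceT (i : ℕ) : ∫⁻ ω, ENNReal.ofReal (exp (-(a * T i ω))) ∂μ = ENNReal.ofReal s := by
    rw [lintegral_exp_neg_mul_of_cdf_eq one_pos (by positivity) (hTm i) (by simpa using hT i),
      ha_def]
    congr 1
    field_simp
    ring
  have hSm : Measurable fun ω => ∑ i ∈ Finset.range (N ω), T i ω :=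
    (measurable_from_prod_countable_left (f := fun p : Ω × ℕ => ∑ i ∈ Finset.range p.2, T i p.1)
      fun n => Finset.measurable_sum (Finset.range n) fun i _ => hTm i).comp
      (measurable_id.prodMk hNm)
  calc _ ≤ _ := measure_le_le_exp_mul_lintegral hSm ha (θ * lam)
    _ = _ := by
      rw [lintegral_exp_neg_mul_sum_range_of_poisson hlam.le hNm hTm hN hTiid hNT hs0.le hlaplaceT,
        ← ENNReal.ofReal_mul (exp_pos _).le, ← exp_add, hθs, ha_def]
      congr 2
      field_simp
      ring
end
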